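/- arXiv:2407.17329 — 5 statements merged into one kernel-verified Lean document; each statement's English description precedes it below -/
import Mathlib

section
/- Let K ≥ 1, N ≥ 1, and let μ^1,…,μ^N be probability measures on ℝ^d that are absolutely continuous with respect to Lebesgue measure and have finite second moments, and let μ̄ = (1/N) Σ_{i=1}^N μ^i. Then the infimum over all centers x = (x_1,…,x_K) ∈ (ℝ^d)^K and all families of weight vectors a = (a^1,…,a^N) ∈ (Σ_K)^N of (1/N) Σ_{i=1}^N W2²(Σ_{k=1}^K a^i_k δ_{x_k}, μ^i) is equal to the infimum over all centers x ∈ (ℝ^d)^K of W2²(Σ_{k=1}^K μ̄(V_k) δ_{x_k}, μ̄), where V_1,…,V_K are the tie-broken Voronoi cells of x_1,…,x_K. -/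
open MeasureTheory
open scoped ENNReal BigOperators

noncomputable section

/-- `ℝ^d` as a Euclidean space. -/
abbrev Rd (d : ℕ) := EuclideanSpace ℝ (Fin d)

/-- Squared 2-Wasserstein distance: infimum over all couplings `π` (probability measures on the
product whose first marginal is `μ` and second marginal is `ν`) of the quadratic cost. -/
def W2sq {d : ℕ} (μ ν : Measure (Rd d)) : ℝ≥0∞ :=
  ⨅ (π : Measure (Rd d × Rd d)) (_ : IsProbabilityMeasure π)
    (_ : π.map Prod.fst = μ) (_ : π.map Prod.snd = ν),
    ∫⁻ p, ENNReal.ofReal (‖p.1 - p.2‖ ^ 2) ∂π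

/-- The discrete measure `∑ k, a k • δ_{x k}`. -/
def discreteMeasure {d K : ℕ} (a : Fin K → ℝ≥0∞) (x : Fin K → Rd d) : Measure (Rd d) :=
  ∑ k, a k • Measure.dirac (x k)

/-- The tie-broken Voronoi cell of the center `x k`. -/
def voronoi {d K : ℕ} (x : Fin K → Rd d) (k : Fin K) : Set (Rd d) :=
  {z | (∀ j, ‖z - x k‖ ≤ ‖z - x j‖) ∧ ∀ j, j < k → ‖z - x k‖ < ‖z - x j‖}

/-- A measure has a finite second moment. -/
def FiniteSecondMoment {d : ℕ} (μ : Measure (Rd d)) : Prop :=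
  ∫⁻ y, ENNReal.ofReal (‖y‖ ^ 2) ∂μ < ⊤

/-!
For fixed centers `x`, any coupling of a measure `ν` with a measure carried by `{x k}` costs at
least the quantization error `∫ min_k ‖z - x k‖² dν`, and the coupling `z ↦ (nearest center, z)`
attains it; its first marginal is the discrete measure with the Voronoi masses `ν (V k)`. So for
each `i` the best weights are the Voronoi masses of `μ i`, the barycenter cost becomes the average
of the quantization errors of the `μ i`, and this is the quantization error of `μbar` since the
quantization error is linear in the measure.
-/

namespace Voronoi

variable {d K : ℕ}

lemma disjoint_voronoi (x : Fin K → Rd d) {i j : Fin K} (hij : i ≠ j) :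
    Disjoint (voronoi x i) (voronoi x j) := by
  wlog hlt : i < j generalizing i j
  · exact (this hij.symm (lt_of_le_of_ne (not_lt.1 hlt) hij.symm)).symm
  exact Set.disjoint_left.2 fun z hi hj => (hj.2 i hlt).not_ge (hi.1 j)

lemma exists_mem_voronoi [NeZero K] (x : Fin K → Rd d) (z : Rd d) : ∃ k, z ∈ voronoi x k := by
  classical
  obtain ⟨m, -, hm⟩ := Finset.univ.exists_min_image (fun k => ‖z - x k‖) Finset.univ_nonempty
  set nearest := Finset.univ.filter fun k => ‖z - x k‖ = ‖z - x m‖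
  have hne : nearest.Nonempty := ⟨m, by simp [nearest]⟩
  have hmin := Finset.min'_mem nearest hne
  simp only [nearest, Finset.mem_filter, Finset.mem_univ, true_and] at hmin
  refine ⟨nearest.min' hne, fun j => hmin ▸ hm j (Finset.mem_univ j), fun j hlt => ?_⟩
  by_contra! hle
  have hj : j ∈ nearest := by
    simpa [nearest] using le_antisymm (hle.trans hmin.le) (hm j (Finset.mem_univ j))
  exact (Finset.min'_le nearest j hj).not_gt hlt

lemma iUnion_voronoi [NeZero K] (x : Fin K → Rd d) : ⋃ k, voronoi x k = Set.univ :=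
  Set.eq_univ_of_forall fun z => Set.mem_iUnion.2 (exists_mem_voronoi x z)

lemma measurableSet_voronoi (x : Fin K → Rd d) (k : Fin K) :
    MeasurableSet (voronoi x k) := by
  have hc : ∀ j, Continuous fun z : Rd d => ‖z - x j‖ := by fun_prop
  have : voronoi x k = (⋂ j, {z | ‖z - x k‖ ≤ ‖z - x j‖}) ∩
      ⋂ j, ⋂ (_ : j < k), {z | ‖z - x k‖ < ‖z - x j‖} := by
    ext z; simp [voronoi]
  rw [this]
  exact (MeasurableSet.iInter fun j => (isClosed_le (hc k) (hc j)).measurableSet).inter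
    (MeasurableSet.iInter fun j => MeasurableSet.iInter fun _ =>
      (isOpen_lt (hc k) (hc j)).measurableSet)

lemma sum_measure_voronoi [NeZero K] (x : Fin K → Rd d) (ν : Measure (Rd d)) :
    ∑ k, ν (voronoi x k) = ν Set.univ := by
  rw [← iUnion_voronoi x, measure_iUnion (fun _ _ h => disjoint_voronoi x h)
    (measurableSet_voronoi x), tsum_fintype]

lemma discreteMeasure_compl_range (a : Fin K → ℝ≥0∞) (x : Fin K → Rd d) :
    discreteMeasure a x (Set.range x)ᶜ = 0 := by
  simp [discreteMeasure, Measure.dirac_apply]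

variable [NeZero K]

def nearestIndex (x : Fin K → Rd d) (z : Rd d) : Fin K := (exists_mem_voronoi x z).choose

lemma mem_voronoi_nearestIndex (x : Fin K → Rd d) (z : Rd d) :
    z ∈ voronoi x (nearestIndex x z) :=
  (exists_mem_voronoi x z).choose_spec

lemma preimage_nearestIndex (x : Fin K → Rd d) (k : Fin K) :
    nearestIndex x ⁻¹' {k} = voronoi x k := by
  ext z
  refine ⟨fun h => (Set.mem_singleton_iff.1 h) ▸ mem_voronoi_nearestIndex x z, fun hz => ?_⟩
  by_contra h
  exact Set.disjoint_left.1 (disjoint_voronoi x h) (mem_voronoi_nearestIndex x z) hz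

lemma measurable_nearestIndex (x : Fin K → Rd d) : Measurable (nearestIndex x) :=
  measurable_to_countable' fun k => preimage_nearestIndex x k ▸ measurableSet_voronoi x k

def nearestCenter (x : Fin K → Rd d) (z : Rd d) : Rd d := x (nearestIndex x z)

lemma measurable_nearestCenter (x : Fin K → Rd d) : Measurable (nearestCenter x) :=
  measurable_from_top.comp (measurable_nearestIndex x)

lemma norm_sub_nearestCenter_le (x : Fin K → Rd d) (z : Rd d) (k : Fin K) :
    ‖z - nearestCenter x z‖ ≤ ‖z - x k‖ :=
  (mem_voronoi_nearestIndex x z).1 k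

lemma map_nearestCenter (x : Fin K → Rd d) (ν : Measure (Rd d)) :
    ν.map (nearestCenter x) = discreteMeasure (fun k => ν (voronoi x k)) x := by
  have hx : Measurable x := measurable_from_top
  rw [show nearestCenter x = x ∘ nearestIndex x from rfl,
    ← Measure.map_map hx (measurable_nearestIndex x),
    Measure.map_eq_sum _ _ (measurable_nearestIndex x), Measure.map_sum hx.aemeasurable,
    Measure.sum_fintype, discreteMeasure]
  simp [preimage_nearestIndex, Measure.map_smul, Measure.map_dirac' hx]

def quantizationError (x : Fin K → Rd d) (ν : Measure (Rd d)) : ℝ≥0∞ :=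
  ∫⁻ z, ENNReal.ofReal (‖z - nearestCenter x z‖ ^ 2) ∂ν

lemma measurable_quantizationIntegrand (x : Fin K → Rd d) :
    Measurable fun z => ENNReal.ofReal (‖z - nearestCenter x z‖ ^ 2) :=
  ((measurable_id.sub (measurable_nearestCenter x)).norm.pow_const 2).ennreal_ofReal

lemma measurable_transportCost :
    Measurable fun p : Rd d × Rd d => ENNReal.ofReal (‖p.1 - p.2‖ ^ 2) := by
  fun_prop

lemma quantizationError_le_W2sq (a : Fin K → ℝ≥0∞) (x : Fin K → Rd d) (ν : Measure (Rd d)) :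
    quantizationError x ν ≤ W2sq (discreteMeasure a x) ν := by
  refine le_iInf fun π => le_iInf fun _ => le_iInf fun hfst => le_iInf fun hsnd => ?_
  have hcenter : ∀ᵐ p ∂π, p.1 ∈ Set.range x := by
    refine (ae_map_iff measurable_fst.aemeasurable (Set.finite_range x).measurableSet).1 ?_
    rw [hfst]
    exact discreteMeasure_compl_range a x
  calc quantizationError x ν
      = ∫⁻ p, ENNReal.ofReal (‖p.2 - nearestCenter x p.2‖ ^ 2) ∂π := by
        rw [← hsnd, quantizationError,
          lintegral_map (measurable_quantizationIntegrand x) measurable_snd]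
    _ ≤ ∫⁻ p, ENNReal.ofReal (‖p.1 - p.2‖ ^ 2) ∂π := by
        refine lintegral_mono_ae (hcenter.mono fun p ⟨k, hk⟩ => ?_)
        gcongr
        rw [← hk, norm_sub_rev (x k)]
        exact norm_sub_nearestCenter_le x p.2 k

lemma W2sq_voronoi (x : Fin K → Rd d) (ν : Measure (Rd d)) [IsProbabilityMeasure ν] :
    W2sq (discreteMeasure (fun k => ν (voronoi x k)) x) ν = quantizationError x ν := by
  have hmap : Measurable fun z => (nearestCenter x z, z) :=
    (measurable_nearestCenter x).prodMk measurable_id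
  refine le_antisymm ?_ (quantizationError_le_W2sq _ x ν)
  refine iInf_le_of_le (ν.map fun z => (nearestCenter x z, z)) <|
    iInf_le_of_le (Measure.isProbabilityMeasure_map hmap.aemeasurable) <|
    iInf_le_of_le ?_ <| iInf_le_of_le ?_ ?_
  · rw [Measure.map_map measurable_fst hmap]
    exact map_nearestCenter x ν
  · rw [Measure.map_map measurable_snd hmap]
    exact Measure.map_id
  · rw [lintegral_map measurable_transportCost hmap, quantizationError]
    simp_rw [norm_sub_rev]
    exact le_rfl

end Voronoi

lemma isProbabilityMeasure_average {α ι : Type*} [MeasurableSpace α] [Fintype ι] [Nonempty ι]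
    (μ : ι → Measure α) [∀ i, IsProbabilityMeasure (μ i)] :
    IsProbabilityMeasure ((Fintype.card ι : ℝ≥0∞)⁻¹ • ∑ i, μ i) :=
  ⟨by simp [ENNReal.inv_mul_cancel]⟩

open Voronoi in
theorem stmt0_general {d : ℕ} (K N : ℕ) (hK : 1 ≤ K) (hN : 1 ≤ N)
    (μ : Fin N → Measure (Rd d))
    (hprob : ∀ i, IsProbabilityMeasure (μ i))
    (μbar : Measure (Rd d)) (hbar : μbar = (N : ℝ≥0∞)⁻¹ • ∑ i, μ i) :
    (⨅ (x : Fin K → Rd d) (a : Fin N → Fin K → ℝ)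
        (_ : ∀ i, (∀ k, 0 ≤ a i k) ∧ ∑ k, a i k = 1),
        (N : ℝ≥0∞)⁻¹ * ∑ i, W2sq (discreteMeasure (fun k => ENNReal.ofReal (a i k)) x) (μ i))
      = ⨅ x : Fin K → Rd d,
          W2sq (discreteMeasure (fun k => μbar (voronoi x k)) x) μbar := by
  have : NeZero K := ⟨by omega⟩
  have : NeZero N := ⟨by omega⟩
  have : IsProbabilityMeasure μbar := by simpa [hbar] using isProbabilityMeasure_average μ
  refine iInf_congr fun x => ?_
  have hbarError : quantizationError x μbar = (N : ℝ≥0∞)⁻¹ * ∑ i, quantizationError x (μ i) := by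
    rw [hbar, quantizationError, lintegral_smul_measure, lintegral_finsetSum_measure]
    rfl
  rw [W2sq_voronoi, hbarError]
  refine le_antisymm ?_ (le_iInf₂ fun a _ => by
    gcongr with i
    exact quantizationError_le_W2sq _ x (μ i))
  refine iInf₂_le_of_le (fun i k => (μ i (voronoi x k)).toReal)
    (fun i => ⟨fun k => ENNReal.toReal_nonneg, ?_⟩) ?_
  · rw [← ENNReal.toReal_sum fun k _ => measure_ne_top _ _, sum_measure_voronoi, measure_univ,
      ENNReal.toReal_one]
  · simp_rw [ENNReal.ofReal_toReal (measure_ne_top _ _), W2sq_voronoi]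
    exact le_rfl

/-- The Wasserstein barycenter problem with varying weights is equivalent to K-means
quantization of the mean measure. -/
theorem stmt0 {d : ℕ} (K N : ℕ) (hK : 1 ≤ K) (hN : 1 ≤ N)
    (μ : Fin N → Measure (Rd d))
    (hprob : ∀ i, IsProbabilityMeasure (μ i))
    (hac : ∀ i, μ i ≪ volume)
    (hmom : ∀ i, FiniteSecondMoment (μ i))
    (μbar : Measure (Rd d)) (hbar : μbar = (N : ℝ≥0∞)⁻¹ • ∑ i, μ i) :
    (⨅ (x : Fin K → Rd d) (a : Fin N → Fin K → ℝ)
        (_ : ∀ i, (∀ k, 0 ≤ a i k) ∧ ∑ k, a i k = 1),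
        (N : ℝ≥0∞)⁻¹ * ∑ i, W2sq (discreteMeasure (fun k => ENNReal.ofReal (a i k)) x) (μ i))
      = ⨅ x : Fin K → Rd d,
          W2sq (discreteMeasure (fun k => μbar (voronoi x k)) x) μbar :=
  stmt0_general K N hK hN μ hprob μbar hbar
end
end

section
/- Let μ be a probability measure on ℝ^d that is absolutely continuous with respect to Lebesgue measure and has finite second moment, and fix points x_1,…,x_K ∈ ℝ^d with tie-broken Voronoi cells V_1,…,V_K. Then the infimum over weight vectors a ∈ Σ_K of W2²(Σ_{k=1}^K a_k δ_{x_k}, μ) is attained at the Voronoi weights a_k = μ(V_k), i.e., W2²(Σ_{k=1}^K μ(V_k) δ_{x_k}, μ) ≤ W2²(Σ_{k=1}^K a_k δ_{x_k}, μ) for every a ∈ Σ_K. -/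
open MeasureTheory
open scoped ENNReal BigOperators

noncomputable section

namespace W2aux

open scoped Classical

variable {d K : ℕ}

/-- Least argmin index. -/
noncomputable def vidx (x : Fin K → Rd d) (hK : 0 < K) (y : Rd d) : Fin K :=
  (Finset.univ.filter (fun k => ∀ j, ‖y - x k‖ ≤ ‖y - x j‖)).min'
    (by
      obtain ⟨k, -, hk⟩ := Finset.exists_min_image Finset.univ (fun k => ‖y - x k‖)
        ⟨⟨0, hK⟩, Finset.mem_univ _⟩
      exact ⟨k, Finset.mem_filter.2 ⟨Finset.mem_univ _, fun j => hk j (Finset.mem_univ _)⟩⟩)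

lemma vidx_mem (x : Fin K → Rd d) (hK : 0 < K) (y : Rd d) :
    y ∈ voronoi x (vidx x hK y) := by
  set s := Finset.univ.filter (fun k => ∀ j, ‖y - x k‖ ≤ ‖y - x j‖) with hs
  have hmem : vidx x hK y ∈ s := Finset.min'_mem _ _
  have hmin : ∀ j, ‖y - x (vidx x hK y)‖ ≤ ‖y - x j‖ :=
    (Finset.mem_filter.1 hmem).2
  refine ⟨hmin, fun j hj => ?_⟩
  have hjns : j ∉ s := fun hjmem => absurd (Finset.min'_le s j hjmem) (not_le.2 hj)
  have : ¬ ∀ i, ‖y - x j‖ ≤ ‖y - x i‖ := by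
    intro h; exact hjns (Finset.mem_filter.2 ⟨Finset.mem_univ _, h⟩)
  push_neg at this
  obtain ⟨i, hi⟩ := this
  exact lt_of_le_of_lt (hmin i) hi

lemma vidx_unique (x : Fin K → Rd d) (hK : 0 < K) {y : Rd d} {k : Fin K}
    (hy : y ∈ voronoi x k) : vidx x hK y = k := by
  set v := vidx x hK y
  have hv := vidx_mem x hK y
  rcases lt_trichotomy v k with h | h | h
  · exact absurd (hv.1 k) (not_le.2 (hy.2 v h))
  · exact h
  · exact absurd (hy.1 v) (not_le.2 (hv.2 k h))

lemma mem_voronoi_iff (x : Fin K → Rd d) (hK : 0 < K) (y : Rd d) (k : Fin K) :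
    y ∈ voronoi x k ↔ vidx x hK y = k := by
  constructor
  · exact vidx_unique x hK
  · rintro rfl; exact vidx_mem x hK y

lemma measurableSet_voronoi (x : Fin K → Rd d) (k : Fin K) :
    MeasurableSet (voronoi x k) := by
  have h1 : ∀ j : Fin K, Measurable fun z : Rd d => ‖z - x j‖ :=
    fun j => (measurable_id.sub measurable_const).norm
  have : voronoi x k =
      (⋂ j, {z : Rd d | ‖z - x k‖ ≤ ‖z - x j‖}) ∩
      (⋂ j, ⋂ (_ : j < k), {z : Rd d | ‖z - x k‖ < ‖z - x j‖}) := by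
    ext z
    simp only [voronoi, Set.mem_setOf_eq, Set.mem_inter_iff, Set.mem_iInter]
  rw [this]
  exact MeasurableSet.inter
    (MeasurableSet.iInter fun j => measurableSet_le (h1 k) (h1 j))
    (MeasurableSet.iInter fun j => MeasurableSet.iInter fun _ =>
      measurableSet_lt (h1 k) (h1 j))

lemma measurable_vidx (x : Fin K → Rd d) (hK : 0 < K) :
    Measurable (vidx x hK) := by
  apply measurable_to_countable'
  intro k
  have : vidx x hK ⁻¹' {k} = voronoi x k := by
    ext y; simp [mem_voronoi_iff x hK y k, eq_comm]
  rw [this]; exact measurableSet_voronoi x k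

lemma measurable_T (x : Fin K → Rd d) (hK : 0 < K) :
    Measurable (fun y => x (vidx x hK y)) :=
  (measurable_of_countable x).comp (measurable_vidx x hK)

lemma map_T_eq (x : Fin K → Rd d) (hK : 0 < K) (μ : Measure (Rd d)) :
    μ.map (fun y => x (vidx x hK y)) = discreteMeasure (fun k => μ (voronoi x k)) x := by
  ext s hs
  rw [Measure.map_apply (measurable_T x hK) hs]
  have hpre : (fun y => x (vidx x hK y)) ⁻¹' s
      = ⋃ k, (if x k ∈ s then voronoi x k else ∅) := by
    ext y
    simp only [Set.mem_preimage, Set.mem_iUnion]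
    constructor
    · intro hy
      refine ⟨vidx x hK y, ?_⟩
      rw [if_pos hy]; exact vidx_mem x hK y
    · rintro ⟨k, hk⟩
      by_cases h : x k ∈ s
      · rw [if_pos h] at hk
        rw [vidx_unique x hK hk]; exact h
      · rw [if_neg h] at hk; exact absurd hk (Set.notMem_empty y)
  rw [hpre, measure_iUnion, tsum_fintype]
  · have hrs : (discreteMeasure (fun k => μ (voronoi x k)) x) s
        = ∑ k, μ (voronoi x k) * s.indicator (1 : Rd d → ℝ≥0∞) (x k) := by
      simp only [discreteMeasure]
      rw [Measure.finset_sum_apply]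
      refine Finset.sum_congr rfl fun k _ => ?_
      rw [Measure.smul_apply, Measure.dirac_apply' _ hs, smul_eq_mul]
    rw [hrs]
    refine Finset.sum_congr rfl fun k _ => ?_
    by_cases h : x k ∈ s
    · simp [if_pos h, Set.indicator_of_mem h]
    · rw [if_neg h, Set.indicator_of_notMem h, mul_zero, measure_empty]
  · intro i j hij
    simp only [Function.onFun]
    refine Set.disjoint_left.2 fun y hyi hyj => hij ?_
    by_cases hi : x i ∈ s
    · by_cases hj : x j ∈ s
      · rw [if_pos hi] at hyi; rw [if_pos hj] at hyj
        rw [← vidx_unique x hK hyi, ← vidx_unique x hK hyj]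
      · rw [if_neg hj] at hyj; exact absurd hyj (Set.notMem_empty y)
    · rw [if_neg hi] at hyi; exact absurd hyi (Set.notMem_empty y)
  · intro k
    by_cases h : x k ∈ s
    · rw [if_pos h]; exact measurableSet_voronoi x k
    · rw [if_neg h]; exact MeasurableSet.empty

lemma measurable_cost {d : ℕ} :
    Measurable (fun p : Rd d × Rd d => ENNReal.ofReal (‖p.1 - p.2‖ ^ 2)) :=
  (((measurable_fst.sub measurable_snd).norm.pow_const 2)).ennreal_ofReal

lemma measurable_f (x : Fin K → Rd d) (hK : 0 < K) :
    Measurable (fun y : Rd d => ENNReal.ofReal (‖y - x (vidx x hK y)‖ ^ 2)) :=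
  (((measurable_id.sub (measurable_T x hK)).norm.pow_const 2)).ennreal_ofReal

end W2aux
/-- The infimum over simplex weights of the squared Wasserstein distance to `μ` of a measure
supported on the fixed centers is attained at the Voronoi weights `a k = μ (V k)`. -/
theorem stmt1 {d : ℕ} (K : ℕ) (μ : Measure (Rd d)) (hprob : IsProbabilityMeasure μ)
    (hac : μ ≪ volume) (hmom : FiniteSecondMoment μ)
    (x : Fin K → Rd d) (a : Fin K → ℝ) (ha : ∀ k, 0 ≤ a k) (hsum : ∑ k, a k = 1) :
    W2sq (discreteMeasure (fun k => μ (voronoi x k)) x) μ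
      ≤ W2sq (discreteMeasure (fun k => ENNReal.ofReal (a k)) x) μ := by
  rcases Nat.eq_zero_or_pos K with hK | hK
  · subst hK
    have h1 : discreteMeasure (fun k : Fin 0 => μ (voronoi x k)) x
        = discreteMeasure (fun k : Fin 0 => ENNReal.ofReal (a k)) x := by
      simp [discreteMeasure]
    rw [h1]
  · set f : Rd d → ℝ≥0∞ := fun y => ENNReal.ofReal (‖y - x (W2aux.vidx x hK y)‖ ^ 2) with hf
    -- Step 1: LHS ≤ ∫ f dμ
    have step1 : W2sq (discreteMeasure (fun k => μ (voronoi x k)) x) μ ≤ ∫⁻ y, f y ∂μ := by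
      set T : Rd d → Rd d := fun y => x (W2aux.vidx x hK y) with hT
      have hTm : Measurable T := W2aux.measurable_T x hK
      have hGm : Measurable (fun y => (T y, y)) := hTm.prodMk measurable_id
      set π0 : Measure (Rd d × Rd d) := μ.map (fun y => (T y, y)) with hπ0
      have hπ0p : IsProbabilityMeasure π0 := Measure.isProbabilityMeasure_map hGm.aemeasurable
      have hfst : π0.map Prod.fst = discreteMeasure (fun k => μ (voronoi x k)) x := by
        rw [hπ0, Measure.map_map measurable_fst hGm]
        exact W2aux.map_T_eq x hK μ
      have hsnd : π0.map Prod.snd = μ := by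
        rw [hπ0, Measure.map_map measurable_snd hGm]
        have : (Prod.snd ∘ fun y => (T y, y)) = id := rfl
        rw [this, Measure.map_id]
      have hcost : ∫⁻ p, ENNReal.ofReal (‖p.1 - p.2‖ ^ 2) ∂π0 = ∫⁻ y, f y ∂μ := by
        rw [hπ0, lintegral_map W2aux.measurable_cost hGm]
        refine lintegral_congr fun y => ?_
        simp only [hf]
        rw [norm_sub_rev]
      calc W2sq (discreteMeasure (fun k => μ (voronoi x k)) x) μ
          ≤ ∫⁻ p, ENNReal.ofReal (‖p.1 - p.2‖ ^ 2) ∂π0 := by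
            refine iInf_le_of_le π0 ?_
            exact iInf_le_of_le hπ0p (iInf_le_of_le hfst (iInf_le_of_le hsnd le_rfl))
        _ = ∫⁻ y, f y ∂μ := hcost
    -- Step 2: ∫ f dμ ≤ RHS
    have step2 : (∫⁻ y, f y ∂μ)
        ≤ W2sq (discreteMeasure (fun k => ENNReal.ofReal (a k)) x) μ := by
      refine le_iInf fun π => le_iInf fun hπp => le_iInf fun hfst => le_iInf fun hsnd => ?_
      have hrange : MeasurableSet (Set.range x) := (Set.finite_range x).measurableSet
      have hA : ∀ᵐ p ∂π, p.1 ∈ Set.range x := by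
        rw [ae_iff]
        have : {p : Rd d × Rd d | ¬ p.1 ∈ Set.range x}
            = Prod.fst ⁻¹' (Set.range x)ᶜ := rfl
        rw [this, ← Measure.map_apply measurable_fst hrange.compl, hfst]
        simp only [discreteMeasure]
        rw [Measure.finset_sum_apply]
        refine Finset.sum_eq_zero fun k _ => ?_
        rw [Measure.smul_apply, Measure.dirac_apply' _ hrange.compl,
          Set.indicator_of_notMem (by simp [Set.mem_range]), smul_eq_mul, mul_zero]
      have hmono : ∫⁻ p, f p.2 ∂π ≤ ∫⁻ p, ENNReal.ofReal (‖p.1 - p.2‖ ^ 2) ∂π := by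
        refine lintegral_mono_ae ?_
        filter_upwards [hA] with p hp
        obtain ⟨k, hk⟩ := hp
        have h1 : ‖p.2 - x (W2aux.vidx x hK p.2)‖ ≤ ‖p.1 - p.2‖ := by
          calc ‖p.2 - x (W2aux.vidx x hK p.2)‖ ≤ ‖p.2 - x k‖ :=
                (W2aux.vidx_mem x hK p.2).1 k
            _ = ‖p.1 - p.2‖ := by rw [← hk]; exact norm_sub_rev _ _
        exact ENNReal.ofReal_le_ofReal
          (pow_le_pow_left₀ (norm_nonneg _) h1 2)
      have heq : ∫⁻ p, f p.2 ∂π = ∫⁻ y, f y ∂μ := by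
        rw [← hsnd, lintegral_map (W2aux.measurable_f x hK) measurable_snd]
      rw [← heq]; exact hmono
    exact step1.trans step2
end
end

section
/- Let μ^1,…,μ^N be probability measures on ℝ^d that are absolutely continuous with respect to Lebesgue measure and have finite second moments, let μ̄ = (1/N) Σ_{i=1}^N μ^i, and fix points x_1,…,x_K ∈ ℝ^d with tie-broken Voronoi cells V_1,…,V_K. Then the infimum over families of weight vectors a = (a^1,…,a^N) ∈ (Σ_K)^N of (1/N) Σ_{i=1}^N W2²(Σ_{k=1}^K a^i_k δ_{x_k}, μ^i) equals W2²(Σ_{k=1}^K μ̄(V_k) δ_{x_k}, μ̄), and this infimum is attained at a^i_k = μ^i(V_k). -/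
open MeasureTheory
open scoped ENNReal BigOperators

noncomputable section

section Aux

open scoped Classical

variable {d K : ℕ} (x : Fin K → Rd d)

open Classical in
/-- The set of indices minimizing the distance from `y` to the centers. -/
def minimizers (y : Rd d) : Finset (Fin K) :=
  Finset.univ.filter (fun k => ∀ j, ‖y - x k‖ ≤ ‖y - x j‖)

lemma minimizers_nonempty (hK : 0 < K) (y : Rd d) : (minimizers x y).Nonempty := by
  classical
  obtain ⟨k, -, hk⟩ := Finset.exists_min_image Finset.univ (fun k => ‖y - x k‖)
    ⟨⟨0, hK⟩, Finset.mem_univ _⟩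
  refine ⟨k, ?_⟩
  simp only [minimizers, Finset.mem_filter, Finset.mem_univ, true_and]
  exact fun j => hk j (Finset.mem_univ j)

/-- Least minimizing index (tie-breaking). -/
def nearIdx (hK : 0 < K) (y : Rd d) : Fin K :=
  (minimizers x y).min' (minimizers_nonempty x hK y)

lemma nearIdx_mem_voronoi (hK : 0 < K) (y : Rd d) : y ∈ voronoi x (nearIdx x hK y) := by
  classical
  have hmem : nearIdx x hK y ∈ minimizers x y := Finset.min'_mem _ _
  simp only [minimizers, Finset.mem_filter, Finset.mem_univ, true_and] at hmem
  refine ⟨hmem, fun j hj => ?_⟩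
  by_contra h
  push_neg at h
  have hjmem : j ∈ minimizers x y := by
    simp only [minimizers, Finset.mem_filter, Finset.mem_univ, true_and]
    exact fun j' => le_trans h (hmem j')
  exact absurd (Finset.min'_le _ _ hjmem) (not_le.mpr hj)

lemma voronoi_disjoint : Pairwise (Function.onFun Disjoint (voronoi x)) := by
  intro j k hjk
  rw [Function.onFun, Set.disjoint_left]
  intro y hyj hyk
  rcases lt_or_gt_of_ne hjk with h | h
  · exact absurd (hyj.1 k) (not_le.mpr (hyk.2 j h))
  · exact absurd (hyk.1 j) (not_le.mpr (hyj.2 k h))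

lemma nearIdx_eq_of_mem (hK : 0 < K) {y : Rd d} {k : Fin K} (hy : y ∈ voronoi x k) :
    nearIdx x hK y = k := by
  by_contra h
  exact Set.disjoint_left.mp (voronoi_disjoint x h) (nearIdx_mem_voronoi x hK y) hy

lemma measurableSet_voronoi (k : Fin K) : MeasurableSet (voronoi x k) := by
  have h1 : ∀ j : Fin K, Measurable fun z : Rd d => ‖z - x j‖ :=
    fun j => (measurable_id.sub measurable_const).norm
  have : voronoi x k = (⋂ j, {z | ‖z - x k‖ ≤ ‖z - x j‖}) ∩
      (⋂ j, ⋂ (_ : j < k), {z | ‖z - x k‖ < ‖z - x j‖}) := by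
    ext z; simp [voronoi]
  rw [this]
  exact (MeasurableSet.iInter fun j => measurableSet_le (h1 k) (h1 j)).inter
    (MeasurableSet.iInter fun j => MeasurableSet.iInter fun _ =>
      measurableSet_lt (h1 k) (h1 j))

lemma measurable_nearIdx (hK : 0 < K) : Measurable (nearIdx x hK) := by
  apply measurable_to_countable'
  intro k
  have : nearIdx x hK ⁻¹' {k} = voronoi x k := by
    ext y
    simp only [Set.mem_preimage, Set.mem_singleton_iff]
    exact ⟨fun h => h ▸ nearIdx_mem_voronoi x hK y, fun h => nearIdx_eq_of_mem x hK h⟩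
  rw [this]
  exact measurableSet_voronoi x k

lemma measurable_nearest (hK : 0 < K) : Measurable (fun y => x (nearIdx x hK y)) :=
  (measurable_from_top).comp (measurable_nearIdx x hK)

lemma discreteMeasure_apply (a : Fin K → ℝ≥0∞) {A : Set (Rd d)} (hA : MeasurableSet A) :
    discreteMeasure a x A = ∑ k, if x k ∈ A then a k else 0 := by
  classical
  rw [discreteMeasure, Measure.finset_sum_apply]
  refine Finset.sum_congr rfl fun k _ => ?_
  rw [Measure.smul_apply, Measure.dirac_apply' _ hA, Set.indicator_apply]
  split_ifs <;> simp

lemma map_nearest (hK : 0 < K) (ν : Measure (Rd d)) :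
    ν.map (fun y => x (nearIdx x hK y)) = discreteMeasure (fun k => ν (voronoi x k)) x := by
  classical
  ext A hA
  rw [Measure.map_apply (measurable_nearest x hK) hA, discreteMeasure_apply x _ hA]
  have hpre : (fun y => x (nearIdx x hK y)) ⁻¹' A
      = ⋃ k, if x k ∈ A then voronoi x k else ∅ := by
    ext y
    simp only [Set.mem_preimage, Set.mem_iUnion]
    constructor
    · intro h
      exact ⟨nearIdx x hK y, by rw [if_pos h]; exact nearIdx_mem_voronoi x hK y⟩
    · rintro ⟨k, hk⟩
      split_ifs at hk with hxk
      · rwa [nearIdx_eq_of_mem x hK hk]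
      · exact absurd hk (Set.notMem_empty y)
  rw [hpre, measure_iUnion ?_ ?_, tsum_fintype]
  · refine Finset.sum_congr rfl fun k _ => ?_
    split_ifs <;> first | rfl | simp
  · intro j k hjk
    refine Disjoint.mono ?_ ?_ (voronoi_disjoint x hjk) <;> dsimp only <;>
      split_ifs <;> simp
  · intro k
    split_ifs
    · exact measurableSet_voronoi x k
    · exact MeasurableSet.empty

/-- Quantization cost: integral of squared distance to the nearest center. -/
def qcost (hK : 0 < K) (ν : Measure (Rd d)) : ℝ≥0∞ :=
  ∫⁻ y, ENNReal.ofReal (‖y - x (nearIdx x hK y)‖ ^ 2) ∂ν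

lemma measurable_qcost_integrand (hK : 0 < K) :
    Measurable fun y : Rd d => ENNReal.ofReal (‖y - x (nearIdx x hK y)‖ ^ 2) :=
  ENNReal.measurable_ofReal.comp
    (((measurable_id.sub (measurable_nearest x hK)).norm).pow_const 2)

lemma qcost_le_W2sq (hK : 0 < K) (ν : Measure (Rd d)) (a : Fin K → ℝ≥0∞) :
    qcost x hK ν ≤ W2sq (discreteMeasure a x) ν := by
  refine le_iInf fun π => le_iInf fun hπ => le_iInf fun h1 => le_iInf fun h2 => ?_
  have hS : MeasurableSet (Set.range x) := (Set.finite_range x).measurableSet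
  have hae : ∀ᵐ p ∂π, p.1 ∈ Set.range x := by
    rw [ae_iff]
    have : {p : Rd d × Rd d | ¬ p.1 ∈ Set.range x} = Prod.fst ⁻¹' (Set.range x)ᶜ := rfl
    rw [this, ← Measure.map_apply measurable_fst hS.compl, h1,
      discreteMeasure_apply x _ hS.compl]
    refine Finset.sum_eq_zero fun k _ => ?_
    rw [if_neg]
    simp [Set.mem_range]
  calc qcost x hK ν = ∫⁻ p, ENNReal.ofReal (‖p.2 - x (nearIdx x hK p.2)‖ ^ 2) ∂π := by
        rw [qcost, ← h2, lintegral_map (measurable_qcost_integrand x hK) measurable_snd]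
    _ ≤ ∫⁻ p, ENNReal.ofReal (‖p.1 - p.2‖ ^ 2) ∂π := by
        refine lintegral_mono_ae ?_
        filter_upwards [hae] with p hp
        obtain ⟨k, hk⟩ := hp
        refine ENNReal.ofReal_le_ofReal ?_
        have h3 : ‖p.2 - x (nearIdx x hK p.2)‖ ≤ ‖p.1 - p.2‖ := by
          calc ‖p.2 - x (nearIdx x hK p.2)‖ ≤ ‖p.2 - x k‖ :=
                (nearIdx_mem_voronoi x hK p.2).1 k
            _ = ‖p.1 - p.2‖ := by rw [← hk, norm_sub_rev]
        exact pow_le_pow_left₀ (norm_nonneg _) h3 2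

lemma W2sq_voronoi (hK : 0 < K) (ν : Measure (Rd d)) [IsProbabilityMeasure ν] :
    W2sq (discreteMeasure (fun k => ν (voronoi x k)) x) ν = qcost x hK ν := by
  refine le_antisymm ?_ (qcost_le_W2sq x hK ν _)
  set g : Rd d → Rd d × Rd d := fun y => (x (nearIdx x hK y), y) with hg
  have hgm : Measurable g := (measurable_nearest x hK).prodMk measurable_id
  set π : Measure (Rd d × Rd d) := ν.map g with hπ
  have hπprob : IsProbabilityMeasure π := Measure.isProbabilityMeasure_map hgm.aemeasurable
  have h1 : π.map Prod.fst = discreteMeasure (fun k => ν (voronoi x k)) x := by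
    rw [hπ, Measure.map_map measurable_fst hgm]
    exact map_nearest x hK ν
  have h2 : π.map Prod.snd = ν := by
    rw [hπ, Measure.map_map measurable_snd hgm]
    have : Prod.snd ∘ g = id := rfl
    rw [this, Measure.map_id]
  refine le_trans (iInf_le_of_le π (iInf_le_of_le hπprob
    (iInf_le_of_le h1 (iInf_le_of_le h2 le_rfl)))) (le_of_eq ?_)
  rw [hπ, lintegral_map ?_ hgm]
  · exact lintegral_congr fun y => by rw [norm_sub_rev]
  · exact ENNReal.measurable_ofReal.comp
      ((measurable_fst.sub measurable_snd).norm.pow_const 2)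

lemma sum_voronoi_measure (hK : 0 < K) (ν : Measure (Rd d)) :
    ∑ k, ν (voronoi x k) = ν Set.univ := by
  have hcover : (⋃ k, voronoi x k) = Set.univ := by
    refine Set.eq_univ_of_forall fun y => Set.mem_iUnion.mpr
      ⟨nearIdx x hK y, nearIdx_mem_voronoi x hK y⟩
  rw [← hcover, measure_iUnion (voronoi_disjoint x) (measurableSet_voronoi x), tsum_fintype]

end Aux

/-- For fixed centers, the infimum over families of simplex weights of the average squared
Wasserstein distances equals the squared Wasserstein distance from the Voronoi quantization
of the mean measure, and it is attained at `a i k = μ i (V k)`. -/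
theorem stmt2 {d : ℕ} (K N : ℕ) (hK : 1 ≤ K) (hN : 1 ≤ N)
    (μ : Fin N → Measure (Rd d))
    (hprob : ∀ i, IsProbabilityMeasure (μ i))
    (hac : ∀ i, μ i ≪ volume)
    (hmom : ∀ i, FiniteSecondMoment (μ i))
    (μbar : Measure (Rd d)) (hbar : μbar = (N : ℝ≥0∞)⁻¹ • ∑ i, μ i)
    (x : Fin K → Rd d) :
    (⨅ (a : Fin N → Fin K → ℝ)
        (_ : ∀ i, (∀ k, 0 ≤ a i k) ∧ ∑ k, a i k = 1),
        (N : ℝ≥0∞)⁻¹ * ∑ i, W2sq (discreteMeasure (fun k => ENNReal.ofReal (a i k)) x) (μ i))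
      = W2sq (discreteMeasure (fun k => μbar (voronoi x k)) x) μbar
    ∧ (N : ℝ≥0∞)⁻¹ * ∑ i, W2sq (discreteMeasure (fun k => (μ i) (voronoi x k)) x) (μ i)
      = W2sq (discreteMeasure (fun k => μbar (voronoi x k)) x) μbar := by
  have hK0 : 0 < K := hK
  have hN0 : (N : ℝ≥0∞) ≠ 0 := Nat.cast_ne_zero.mpr (by omega)
  haveI : ∀ i, IsProbabilityMeasure (μ i) := hprob
  haveI hbarprob : IsProbabilityMeasure μbar := by
    constructor
    rw [hbar, Measure.smul_apply, smul_eq_mul]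
    have : (∑ i, μ i) Set.univ = (N : ℝ≥0∞) := by
      rw [Measure.finset_sum_apply]
      simp [measure_univ]
    rw [this, ENNReal.inv_mul_cancel hN0 (ENNReal.natCast_ne_top N)]
  have havg : qcost x hK0 μbar = (N : ℝ≥0∞)⁻¹ * ∑ i, qcost x hK0 (μ i) := by
    rw [qcost, hbar, lintegral_smul_measure, lintegral_finset_sum_measure]
    rfl
  have hattain : ∀ i, W2sq (discreteMeasure (fun k => μ i (voronoi x k)) x) (μ i)
      = qcost x hK0 (μ i) := fun i => W2sq_voronoi x hK0 (μ i)
  have hRHS : W2sq (discreteMeasure (fun k => μbar (voronoi x k)) x) μbar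
      = qcost x hK0 μbar := W2sq_voronoi x hK0 μbar
  have hsecond : (N : ℝ≥0∞)⁻¹ * ∑ i, W2sq (discreteMeasure
        (fun k => (μ i) (voronoi x k)) x) (μ i)
      = W2sq (discreteMeasure (fun k => μbar (voronoi x k)) x) μbar := by
    rw [hRHS, havg]
    congr 1
    exact Finset.sum_congr rfl fun i _ => hattain i
  refine ⟨le_antisymm ?_ ?_, hsecond⟩
  · set astar : Fin N → Fin K → ℝ := fun i k => (μ i (voronoi x k)).toReal with hastar
    have hsimplex : ∀ i, (∀ k, 0 ≤ astar i k) ∧ ∑ k, astar i k = 1 := by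
      intro i
      refine ⟨fun k => ENNReal.toReal_nonneg, ?_⟩
      rw [hastar]
      rw [← ENNReal.toReal_sum (fun k _ => measure_ne_top _ _),
        sum_voronoi_measure x hK0 (μ i), measure_univ, ENNReal.toReal_one]
    refine le_trans (iInf_le_of_le astar (iInf_le_of_le hsimplex le_rfl)) ?_
    rw [← hsecond]
    refine le_of_eq ?_
    congr 1
    refine Finset.sum_congr rfl fun i _ => ?_
    have : (fun k => ENNReal.ofReal (astar i k)) = fun k => μ i (voronoi x k) :=
      funext fun k => ENNReal.ofReal_toReal (measure_ne_top _ _)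
    rw [this]
  · refine le_iInf fun a => le_iInf fun ha => ?_
    rw [hRHS, havg]
    exact mul_le_mul_right (Finset.sum_le_sum fun i _ => qcost_le_W2sq x hK0 (μ i) _) _
end
end

section
/- Let x_1,…,x_K ∈ ℝ^d be pairwise distinct points and let μ be a probability measure on ℝ^d that is absolutely continuous with respect to Lebesgue measure and has finite second moment. Define G : ℝ^K → ℝ by G(φ) = ∫ min_{1≤k≤K} (‖x_k − y‖² − φ_k) dμ(y). Then for every φ ∈ ℝ^K and every index k, the partial derivative of G with respect to φ_k exists at φ and equals −μ(L_k(φ)), where L_k(φ) is the k-th Laguerre cell of (x, φ). -/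
open MeasureTheory
open scoped ENNReal BigOperators

noncomputable section

/-- The Laguerre cell of the center `x k` with potential `φ`. -/
def laguerre {d K : ℕ} (x : Fin K → Rd d) (φ : Fin K → ℝ) (k : Fin K) : Set (Rd d) :=
  {z | ∀ j, ‖z - x k‖ ^ 2 - φ k ≤ ‖z - x j‖ ^ 2 - φ j}

/-!
For fixed `y`, the integrand `t ↦ minⱼ (‖x j - y‖² - φ j)` with `φ k` replaced by `t` is
1-Lipschitz. Off the bisectors `{‖x k - y‖² - φ k = ‖x j - y‖² - φ j}`, which are affine
hyperplanes because `x j ≠ x k` and hence `μ`-null, near `t = φ k` it is `‖x k - y‖² - t` when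
`y ∈ L_k(φ)` and constant otherwise. Differentiating under the integral sign (dominated by the
constant `1`) gives the derivative `∫ -𝟙_{L_k(φ)} dμ`.
-/

open Filter Function Set
open scoped RealInnerProductSpace Topology NNReal

section Hyperplane

variable {E : Type*} [NormedAddCommGroup E] [InnerProductSpace ℝ E] [FiniteDimensional ℝ E]
  [MeasurableSpace E] [BorelSpace E]

lemma MeasureTheory.Measure.addHaar_setOf_inner_eq (μ : Measure E) [μ.IsAddHaarMeasure] {v : E}
    (hv : v ≠ 0) (c : ℝ) : μ {y | ⟪v, y⟫ = c} = 0 := by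
  set y₀ : E := (c / ‖v‖ ^ 2) • v
  have hy₀ : ⟪v, y₀⟫ = c := by
    have : ‖v‖ ^ 2 ≠ 0 := by positivity
    rw [real_inner_smul_right, real_inner_self_eq_norm_sq]
    field_simp
  have hset : {y | ⟪v, y⟫ = c} = (· + -y₀) ⁻¹' (LinearMap.ker (innerₛₗ ℝ v) : Set E) := by
    ext y
    simp [inner_add_right, hy₀, add_neg_eq_zero]
  rw [hset, measure_preimage_add_right]
  refine Measure.addHaar_submodule μ _ fun h => hv ?_
  have hv_mem : v ∈ LinearMap.ker (innerₛₗ ℝ v) := h ▸ Submodule.mem_top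
  simpa [real_inner_self_eq_norm_sq] using hv_mem

lemma MeasureTheory.Measure.addHaar_setOf_norm_sub_sq_sub_eq (μ : Measure E) [μ.IsAddHaarMeasure]
    {a b : E} (hab : a ≠ b) (s t : ℝ) : μ {y | ‖a - y‖ ^ 2 - s = ‖b - y‖ ^ 2 - t} = 0 := by
  refine measure_mono_null (fun y (hy : ‖a - y‖ ^ 2 - s = ‖b - y‖ ^ 2 - t) => ?_)
    (Measure.addHaar_setOf_inner_eq μ (sub_ne_zero.2 hab.symm) ((‖b‖ ^ 2 - ‖a‖ ^ 2 + s - t) / 2))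
  rw [norm_sub_sq_real, norm_sub_sq_real] at hy
  change ⟪b - a, y⟫ = _
  rw [inner_sub_left]
  linarith

end Hyperplane

lemma ciInf_eq_of_forall_le {ι α : Type*} [ConditionallyCompleteLattice α] {f : ι → α} {i : ι}
    (h : ∀ j, f i ≤ f j) : ⨅ j, f j = f i :=
  have : Nonempty ι := ⟨i⟩
  (IsLeast.isGLB ⟨mem_range_self i, forall_mem_range.2 h⟩).ciInf_eq

lemma LipschitzWith.ciInf {ι α : Type*} [PseudoMetricSpace α] [Finite ι] [Nonempty ι] {K : ℝ≥0}
    {f : ι → α → ℝ} (hf : ∀ i, LipschitzWith K (f i)) : LipschitzWith K fun x => ⨅ i, f i x :=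
  LipschitzWith.of_le_add_mul K fun x y => by
    have := le_ciInf fun i => sub_le_iff_le_add.2 <|
      (ciInf_le (finite_range _).bddBelow i).trans ((hf i).le_add_mul x y)
    linarith

lemma MeasureTheory.Integrable.ciInf {ι α : Type*} [MeasurableSpace α] {μ : Measure α} [Finite ι]
    [Nonempty ι] {f : ι → α → ℝ} (hf : ∀ i, Integrable (f i) μ) :
    Integrable (fun x => ⨅ i, f i x) μ := by
  have := Fintype.ofFinite ι
  refine (integrable_finsetSum Finset.univ fun i _ => (hf i).norm).mono'
    (AEMeasurable.iInf fun i => (hf i).aemeasurable).aestronglyMeasurable (ae_of_all _ fun x => ?_)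
  obtain ⟨j, hj⟩ := exists_eq_ciInf_of_finite (f := fun i => f i x)
  rw [← hj]
  exact Finset.single_le_sum (f := fun i => ‖f i x‖) (fun i _ => norm_nonneg _) (Finset.mem_univ j)

section MinOfAffine

variable {ι : Type*} [Finite ι] [DecidableEq ι] (a φ : ι → ℝ) (k : ι)

lemma lipschitzWith_ciInf_sub_update [Nonempty ι] :
    LipschitzWith 1 fun t => ⨅ j, a j - update φ k t j := by
  refine LipschitzWith.ciInf fun j => ?_
  rcases eq_or_ne j k with rfl | hjk
  · simpa using (LipschitzWith.const' (a j) (K := 0)).sub LipschitzWith.id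
  · simpa [update_of_ne hjk] using LipschitzWith.const' (α := ℝ) (a j - φ j)

variable {a φ k}

lemma hasDerivAt_ciInf_sub_update_of_forall_lt (h : ∀ j ≠ k, a k - φ k < a j - φ j) :
    HasDerivAt (fun t => ⨅ j, a j - update φ k t j) (-1) (φ k) := by
  have hnear : ∀ᶠ t in 𝓝 (φ k), ∀ j ≠ k, a k - t < a j - φ j := by
    refine eventually_all.2 fun j => ?_
    rcases eq_or_ne j k with rfl | hjk
    · exact Eventually.of_forall fun _ h => absurd rfl h
    · exact ((continuous_sub_left (a k)).continuousAt.eventually_lt continuousAt_const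
        (h j hjk)).mono fun _ ht _ => ht
  refine ((hasDerivAt_id _).const_sub (a k)).congr_of_eventuallyEq ?_
  filter_upwards [hnear] with t ht
  refine (ciInf_eq_of_forall_le (i := k) fun j => ?_).trans (by simp)
  rcases eq_or_ne j k with rfl | hjk
  · simp
  · simpa [update_of_ne hjk] using (ht j hjk).le

lemma hasDerivAt_ciInf_sub_update_of_lt {j₀ : ι} (h : a j₀ - φ j₀ < a k - φ k) :
    HasDerivAt (fun t => ⨅ j, a j - update φ k t j) 0 (φ k) := by
  have : Nonempty ι := ⟨k⟩
  obtain ⟨j₁, hmin⟩ := Finite.exists_min fun j => a j - φ j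
  have hj₁k : j₁ ≠ k := by
    rintro rfl
    exact (hmin j₀).not_gt h
  have hnear : ∀ᶠ t in 𝓝 (φ k), a j₁ - φ j₁ < a k - t :=
    continuousAt_const.eventually_lt (continuous_sub_left (a k)).continuousAt
      ((hmin j₀).trans_lt h)
  refine (hasDerivAt_const _ (a j₁ - φ j₁)).congr_of_eventuallyEq ?_
  filter_upwards [hnear] with t ht
  refine (ciInf_eq_of_forall_le (i := j₁) fun j => ?_).trans (by simp [update_of_ne hj₁k])
  rcases eq_or_ne j k with rfl | hjk
  · simpa [update_of_ne hj₁k] using ht.le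
  · simpa [update_of_ne hjk, update_of_ne hj₁k] using hmin j

open scoped Classical in
lemma hasDerivAt_ciInf_sub_update (h : ∀ j ≠ k, a k - φ k ≠ a j - φ j) :
    HasDerivAt (fun t => ⨅ j, a j - update φ k t j)
      (if ∀ j, a k - φ k ≤ a j - φ j then -1 else 0) (φ k) := by
  split_ifs with hk
  · exact hasDerivAt_ciInf_sub_update_of_forall_lt fun j hj => (hk j).lt_of_ne (h j hj)
  · obtain ⟨j₀, hj₀⟩ := not_forall.1 hk
    exact hasDerivAt_ciInf_sub_update_of_lt (not_le.1 hj₀)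

end MinOfAffine

lemma ae_forall_norm_sub_sq_sub_ne {E ι : Type*} [NormedAddCommGroup E] [InnerProductSpace ℝ E]
    [FiniteDimensional ℝ E] [MeasurableSpace E] [BorelSpace E] {ν μ : Measure E}
    [ν.IsAddHaarMeasure] (hac : μ ≪ ν) {x : ι → E} (hx : Injective x) [Countable ι] (φ : ι → ℝ)
    (k : ι) : ∀ᵐ y ∂μ, ∀ j ≠ k, ‖x k - y‖ ^ 2 - φ k ≠ ‖x j - y‖ ^ 2 - φ j := by
  refine ae_all_iff.2 fun j => ?_
  rcases eq_or_ne j k with rfl | hjk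
  · exact ae_of_all _ fun _ h => absurd rfl h
  · have hnull := hac (Measure.addHaar_setOf_norm_sub_sq_sub_eq ν (hx.ne hjk.symm) (φ k) (φ j))
    exact (ae_iff.2 (by simpa only [ne_eq, not_not] using hnull)).mono fun _ hy _ => hy

section Moments

variable {d : ℕ} {μ : Measure (Rd d)}

lemma FiniteSecondMoment.memLp_two (h : FiniteSecondMoment μ) : MemLp id 2 μ :=
  (memLp_two_iff_integrable_sq_norm aestronglyMeasurable_id).2
    ⟨by fun_prop, (hasFiniteIntegral_iff_ofReal (ae_of_all _ fun _ => by positivity)).2 h⟩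

lemma FiniteSecondMoment.integrable_norm_sub_sq [IsFiniteMeasure μ] (h : FiniteSecondMoment μ)
    (a : Rd d) : Integrable (fun y => ‖a - y‖ ^ 2) μ :=
  ((memLp_const a).sub h.memLp_two).integrable_norm_pow two_ne_zero

end Moments

section Laguerre

variable {d K : ℕ} {x : Fin K → Rd d} {φ : Fin K → ℝ} {k : Fin K}

lemma mem_laguerre_iff {z : Rd d} :
    z ∈ laguerre x φ k ↔ ∀ j, ‖x k - z‖ ^ 2 - φ k ≤ ‖x j - z‖ ^ 2 - φ j := by
  simp only [laguerre, mem_ofPred_eq, norm_sub_rev z]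

lemma isClosed_laguerre : IsClosed (laguerre x φ k) := by
  simp only [laguerre, ofPred_forall]
  exact isClosed_iInter fun j => isClosed_le (by fun_prop) (by fun_prop)

end Laguerre

theorem stmt12_general {d : ℕ} (K : ℕ)
    (x : Fin K → Rd d) (hx : Function.Injective x)
    (μ : Measure (Rd d)) (hprob : IsProbabilityMeasure μ) (hac : μ ≪ volume)
    (hmom : FiniteSecondMoment μ) (φ : Fin K → ℝ) (k : Fin K) :
    HasDerivAt
      (fun t : ℝ => ∫ y, (⨅ j, (‖x j - y‖ ^ 2 - Function.update φ k t j)) ∂μ)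
      (-(μ (laguerre x φ k)).toReal) (φ k) := by
  have : Nonempty (Fin K) := ⟨k⟩
  have hint (t : ℝ) : Integrable (fun y => ⨅ j, ‖x j - y‖ ^ 2 - update φ k t j) μ :=
    Integrable.ciInf fun j => (hmom.integrable_norm_sub_sq (x j)).sub (integrable_const _)
  have hL : MeasurableSet (laguerre x φ k) := isClosed_laguerre.measurableSet
  have hderiv : ∀ᵐ y ∂μ, HasDerivAt (fun t => ⨅ j, ‖x j - y‖ ^ 2 - update φ k t j)
      ((laguerre x φ k).indicator (fun _ => -1) y) (φ k) := by
    filter_upwards [ae_forall_norm_sub_sq_sub_ne hac hx φ k] with y hy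
    convert hasDerivAt_ciInf_sub_update (a := fun j => ‖x j - y‖ ^ 2) hy using 1
    simp only [indicator, mem_laguerre_iff]
    congr
  have hlip : ∀ᵐ y ∂μ, LipschitzOnWith (Real.nnabs 1)
      (fun t => ⨅ j, ‖x j - y‖ ^ 2 - update φ k t j) univ :=
    ae_of_all _ fun y => by
      simpa using lipschitzWith_ciInf_sub_update (fun j => ‖x j - y‖ ^ 2) φ k
  obtain ⟨-, hdiff⟩ := hasDerivAt_integral_of_dominated_loc_of_lip univ_mem
    (Eventually.of_forall fun t => (hint t).aestronglyMeasurable) (hint _)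
    (aestronglyMeasurable_const.indicator hL) hlip (integrable_const 1) hderiv
  rwa [integral_indicator_const _ hL, smul_eq_mul, mul_neg_one, measureReal_def] at hdiff

/-- The partial derivative of `G(φ) = ∫ min_k (‖x k − y‖² − φ k) dμ(y)` with respect to `φ k`
exists and equals `−μ(L_k(φ))`, the negative mass of the `k`-th Laguerre cell. -/
theorem stmt12 {d : ℕ} (K : ℕ) (hK : 1 ≤ K)
    (x : Fin K → Rd d) (hx : Function.Injective x)
    (μ : Measure (Rd d)) (hprob : IsProbabilityMeasure μ) (hac : μ ≪ volume)
    (hmom : FiniteSecondMoment μ) (φ : Fin K → ℝ) (k : Fin K) :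
    HasDerivAt
      (fun t : ℝ => ∫ y, (⨅ j, (‖x j - y‖ ^ 2 - Function.update φ k t j)) ∂μ)
      (-(μ (laguerre x φ k)).toReal) (φ k) :=
  stmt12_general K x hx μ hprob hac hmom φ k
end
end

section
/- Let σ > 0 and let Λ_σ be the centered Gaussian probability measure on ℝ^d with covariance σ^{-2} times the identity matrix. Then for all x, y ∈ ℝ^d, ∫ [sin(⟨ω, x⟩) sin(⟨ω, y⟩) + cos(⟨ω, x⟩) cos(⟨ω, y⟩)] dΛ_σ(ω) = exp(−‖x−y‖² / (2σ²)); i.e., the random Fourier feature inner product is an unbiased estimator of the Gaussian (RBF) kernel. -/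
/-!
The feature inner product is `cos ⟨ω, x - y⟩`, the real part of `exp (i ⟨ω, x - y⟩)`. Under the
product measure its integral factorises into one-dimensional characteristic functions, and the
characteristic function of `N(0, v)` at `t` is `exp (-v t² / 2)`.
-/

open MeasureTheory Complex ProbabilityTheory

lemma integral_cos_eq_re_integral_cexp {Ω : Type*} [MeasurableSpace Ω] (μ : Measure Ω)
    [IsFiniteMeasure μ] {f : Ω → ℝ} (hf : Measurable f) :
    ∫ ω, Real.cos (f ω) ∂μ = (∫ ω, cexp (f ω * I) ∂μ).re := by
  have hint : Integrable (fun ω ↦ cexp (f ω * I)) μ :=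
    .of_bound (by fun_prop) 1 (ae_of_all _ fun ω ↦ (norm_exp_ofReal_mul_I (f ω)).le)
  rw [← RCLike.re_to_complex, ← integral_re hint]
  simp only [RCLike.re_to_complex, exp_ofReal_mul_I_re]

lemma integral_cexp_sum_mul_I_pi {ι : Type*} [Fintype ι] (μ : ι → Measure ℝ)
    [∀ i, SigmaFinite (μ i)] (t : ι → ℝ) :
    ∫ ω, cexp ((∑ i, ω i * t i : ℝ) * I) ∂Measure.pi μ = ∏ i, charFun (μ i) (t i) := by
  simp_rw [charFun_apply_real, ← integral_fintype_prod_eq_prod, ofReal_sum, Finset.sum_mul,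
    Complex.exp_sum, ofReal_mul, mul_comm (t _ : ℂ)]

lemma charFun_gaussianReal_zero (v : NNReal) (t : ℝ) :
    charFun (gaussianReal 0 v) t = (Real.exp (-(v * t ^ 2 / 2)) : ℂ) := by
  rw [charFun_gaussianReal]
  push_cast
  ring_nf

lemma integral_cos_sum_mul_gaussianReal_pi {ι : Type*} [Fintype ι] (v : NNReal) (t : ι → ℝ) :
    ∫ ω, Real.cos (∑ i, ω i * t i) ∂Measure.pi (fun _ : ι ↦ gaussianReal 0 v)
      = Real.exp (-(v * ∑ i, t i ^ 2) / 2) := by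
  rw [integral_cos_eq_re_integral_cexp _ (by fun_prop), integral_cexp_sum_mul_I_pi]
  simp_rw [charFun_gaussianReal_zero, ← ofReal_prod, ← Real.exp_sum, ofReal_re, Finset.mul_sum,
    neg_div, Finset.sum_div, Finset.sum_neg_distrib]

theorem stmt15_general (d : ℕ) (σ : ℝ) (x y : Fin d → ℝ) :
    ∫ ω : Fin d → ℝ,
        (Real.sin (∑ i, ω i * x i) * Real.sin (∑ i, ω i * y i)
          + Real.cos (∑ i, ω i * x i) * Real.cos (∑ i, ω i * y i))
        ∂(Measure.pi fun _ : Fin d =>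
            ProbabilityTheory.gaussianReal 0 (Real.toNNReal (1 / σ ^ 2)))
      = Real.exp (-(∑ i, (x i - y i) ^ 2) / (2 * σ ^ 2)) := by
  have hfeature : ∀ ω : Fin d → ℝ,
      Real.sin (∑ i, ω i * x i) * Real.sin (∑ i, ω i * y i)
        + Real.cos (∑ i, ω i * x i) * Real.cos (∑ i, ω i * y i)
      = Real.cos (∑ i, ω i * (x i - y i)) := fun ω ↦ by
    simp only [mul_sub, Finset.sum_sub_distrib, Real.cos_sub, add_comm]
  simp_rw [hfeature, integral_cos_sum_mul_gaussianReal_pi,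
    Real.coe_toNNReal _ (by positivity : (0 : ℝ) ≤ 1 / σ ^ 2)]
  congr 1
  ring

/-- Random Fourier features are unbiased estimators of the Gaussian (RBF) kernel: the expected
inner product of the sine/cosine features under the Gaussian spectral measure with covariance
`σ⁻² Id` equals `exp(−‖x − y‖² / (2σ²))`. -/
theorem stmt15 (d : ℕ) (σ : ℝ) (hσ : 0 < σ) (x y : Fin d → ℝ) :
    ∫ ω : Fin d → ℝ,
        (Real.sin (∑ i, ω i * x i) * Real.sin (∑ i, ω i * y i)
          + Real.cos (∑ i, ω i * x i) * Real.cos (∑ i, ω i * y i))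
        ∂(Measure.pi fun _ : Fin d =>
            ProbabilityTheory.gaussianReal 0 (Real.toNNReal (1 / σ ^ 2)))
      = Real.exp (-(∑ i, (x i - y i) ^ 2) / (2 * σ ^ 2)) :=
  stmt15_general d σ x y
end
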